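/- arXiv:1807.05349 — 2 statements merged into one kernel-verified Lean document; each statement's English description precedes it below -/
import Mathlib

section
/- Let k ∈ ℕ and η > 0. There exists δ > 0, depending only on k and η, such that for every square Q ⊂ ℝ², every polynomial P of degree at most k on ℝ², and every measurable set F ⊂ Q with |F| > η|Q|, the set F̃ = {x ∈ F : |P(x)| ≥ δ · max_{y∈Q} |P(y)|} satisfies |F̃| ≥ |F|/2. -/
/-!
A Remez-type inequality. In one variable: if the sublevel set `{|q| ≤ δ M}` of a polynomial of
degree `n` filled more than a `θ`-fraction of an interval `I`, it would contain `n + 1` points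
pairwise `θ |I| / (2 (n + 1))` apart, and Lagrange interpolation at these points would bound `|q|`
on all of `I` by `C(n, θ) δ M`, contradicting `|q| ≥ M` somewhere once `δ = 1 / (2 C)`.
In two variables, by Fubini: the horizontal line through a point where `|P|` attains its
maximum `M` on `Q` meets `{|P| ≤ δ M}` in a `θ`-fraction, and each vertical line through a point
off that set meets `{|P| ≤ δ² M}` in a `θ`-fraction, so `{x ∈ Q | |P x| < δ² sup_Q |P|}` has
measure at most `2 θ |Q|`. For `θ = η / 4` this is at most `|F| / 2`, and it covers `F \ F̃`.
-/

open MeasureTheory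

/-- `Q` is the (closed, axis-parallel) square in `ℝ²` with lower-left corner `c` and
side length `s > 0`. -/
def IsSquare2 (Q : Set (EuclideanSpace ℝ (Fin 2))) (c : EuclideanSpace ℝ (Fin 2))
    (s : ℝ) : Prop :=
  0 < s ∧ Q = {x | ∀ i : Fin 2, x i ∈ Set.Icc (c i) (c i + s)}

/-- `P : ℝ² → ℝ` is (given by) a polynomial of total degree at most `k`. -/
def IsPolyDeg (P : EuclideanSpace ℝ (Fin 2) → ℝ) (k : ℕ) : Prop :=
  ∃ p : MvPolynomial (Fin 2) ℝ, p.totalDegree ≤ k ∧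
    ∀ x, P x = MvPolynomial.eval (fun i => x i) p

open Set Polynomial
open scoped ENNReal

theorem norm_eval_le_of_separated {𝕜 : Type*} [NormedField 𝕜] {n : ℕ} {p : 𝕜[X]}
    (hp : p.natDegree ≤ n) {x : Fin (n + 1) → 𝕜} {d L ε : ℝ} {t : 𝕜} (hd : 0 < d)
    (hsep : Pairwise fun i j => d ≤ ‖x i - x j‖) (ht : ∀ i, ‖t - x i‖ ≤ L)
    (hsmall : ∀ i, ‖p.eval (x i)‖ ≤ ε) :
    ‖p.eval t‖ ≤ (n + 1) * (L / d) ^ n * ε := by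
  classical
  have hL : 0 ≤ L := (norm_nonneg _).trans (ht 0)
  have hε : 0 ≤ ε := (norm_nonneg _).trans (hsmall 0)
  have hinj : InjOn x (Finset.univ : Finset (Fin (n + 1))) := fun i _ j _ hij => by
    by_contra hne
    have : d ≤ ‖x i - x j‖ := hsep hne
    rw [hij, sub_self, norm_zero] at this
    linarith
  have hdeg : p.degree < (Finset.univ : Finset (Fin (n + 1))).card := by
    rw [Finset.card_univ, Fintype.card_fin]
    exact (degree_le_natDegree.trans (WithBot.coe_le_coe.2 hp)).trans_lt
      (WithBot.coe_lt_coe.2 n.lt_succ_self)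
  have hbasis : ∀ i, ‖(Lagrange.basis Finset.univ x i).eval t‖ ≤ (L / d) ^ n := by
    intro i
    rw [Lagrange.basis, eval_prod, norm_prod]
    calc ∏ j ∈ Finset.univ.erase i, ‖(Lagrange.basisDivisor (x i) (x j)).eval t‖
        ≤ ∏ j ∈ Finset.univ.erase i, L / d := by
          gcongr with j hj
          rw [Lagrange.basisDivisor, eval_mul, eval_C, eval_sub, eval_X, eval_C, norm_mul,
            norm_inv, inv_mul_eq_div]
          exact div_le_div₀ hL (ht j) hd (hsep (Finset.ne_of_mem_erase hj).symm)
      _ = (L / d) ^ n := by simp [div_pow]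
  rw [Lagrange.eq_interpolate hinj hdeg, Lagrange.interpolate_apply, eval_finsetSum]
  calc ‖∑ i, (C (p.eval (x i)) * Lagrange.basis Finset.univ x i).eval t‖
      ≤ ∑ i : Fin (n + 1), ε * (L / d) ^ n := by
        refine (norm_sum_le _ _).trans (Finset.sum_le_sum fun i _ => ?_)
        rw [eval_mul, eval_C, norm_mul]
        exact mul_le_mul (hsmall i) (hbasis i) (norm_nonneg _) hε
    _ = (n + 1) * (L / d) ^ n * ε := by simp; ring

/-- Greedy choice: take `x₀ ∈ E` within `μ` of `inf E`; the part of `E` below `x₀ + μ` has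
measure at most `2 μ`, and we recurse on the rest. -/
theorem exists_separated_points_of_lt_volume {E : Set ℝ} (hE : BddBelow E) {μ : ℝ} (hμ : 0 < μ) :
    ∀ m : ℕ, ENNReal.ofReal (2 * m * μ) < volume E →
      ∃ x : Fin m → ℝ, (∀ i, x i ∈ E) ∧ Pairwise fun i j => μ ≤ |x i - x j|
  | 0, _ => ⟨Fin.elim0, fun i => i.elim0, fun i => i.elim0⟩
  | m + 1, hvol => by
    obtain ⟨x₀, hx₀E, hx₀⟩ := exists_lt_of_csInf_lt (nonempty_of_measure_ne_zero hvol.ne_bot)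
      (lt_add_of_pos_right (sInf E) hμ)
    have hlow : volume (E ∩ Iio (x₀ + μ)) ≤ ENNReal.ofReal (2 * μ) :=
      calc volume (E ∩ Iio (x₀ + μ)) ≤ volume (Ico (sInf E) (x₀ + μ)) :=
            measure_mono fun y hy => ⟨csInf_le hE hy.1, hy.2⟩
        _ ≤ ENNReal.ofReal (2 * μ) := by rw [Real.volume_Ico]; gcongr; linarith
    have hhigh : ENNReal.ofReal (2 * m * μ) < volume (E \ Iio (x₀ + μ)) := by
      refine (ENNReal.add_lt_add_iff_left (ENNReal.ofReal_ne_top (r := 2 * μ))).1 ?_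
      calc ENNReal.ofReal (2 * μ) + ENNReal.ofReal (2 * m * μ)
          = ENNReal.ofReal (2 * (m + 1 : ℕ) * μ) := by
            rw [← ENNReal.ofReal_add (by positivity) (by positivity)]; push_cast; ring_nf
        _ < volume E := hvol
        _ ≤ volume (E ∩ Iio (x₀ + μ)) + volume (E \ Iio (x₀ + μ)) :=
            measure_le_inter_add_sdiff _ _ _
        _ ≤ ENNReal.ofReal (2 * μ) + volume (E \ Iio (x₀ + μ)) := by gcongr
    obtain ⟨x, hxE, hx⟩ :=
      exists_separated_points_of_lt_volume (hE.mono sdiff_subset) hμ m hhigh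
    have hfar : ∀ i, μ ≤ |x i - x₀| := fun i =>
      (le_sub_iff_add_le'.2 (not_lt.1 (hxE i).2)).trans (le_abs_self _)
    refine ⟨Fin.cons x₀ x, Fin.cases hx₀E fun i => (hxE i).1, fun i j hij => ?_⟩
    cases i using Fin.cases <;> cases j using Fin.cases
    · exact absurd rfl hij
    · simpa [abs_sub_comm] using hfar _
    · simpa using hfar _
    · simpa using hx (ne_of_apply_ne Fin.succ hij)

theorem MeasurableSet.sep_abs_le {α : Type*} [MeasurableSpace α] {S : Set α}
    (hS : MeasurableSet S) {f : α → ℝ} (hf : Measurable f) (r : ℝ) :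
    MeasurableSet {z ∈ S | |f z| ≤ r} :=
  hS.inter (measurableSet_le (continuous_abs.measurable.comp hf) measurable_const)

theorem exists_volume_sublevel_Icc_le (n : ℕ) {θ : ℝ} (hθ : 0 < θ) :
    ∃ δ > 0, ∀ q : ℝ[X], q.natDegree ≤ n → ∀ a b M : ℝ, 0 < M →
      (∃ t ∈ Icc a b, M ≤ |q.eval t|) →
      volume {t ∈ Icc a b | |q.eval t| ≤ δ * M} ≤ ENNReal.ofReal (θ * (b - a)) := by
  set C : ℝ := (n + 1) * (2 * (n + 1) / θ) ^ n
  refine ⟨(2 * C)⁻¹, by positivity, ?_⟩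
  rintro q hq a b M hM ⟨t, ht, hMt⟩
  set E := {t ∈ Icc a b | |q.eval t| ≤ (2 * C)⁻¹ * M}
  by_contra! hE
  have hab : 0 < b - a := by
    have := hE.trans_le (measure_mono (sep_subset _ _))
    rw [Real.volume_Icc, ENNReal.ofReal_lt_ofReal_iff'] at this
    exact this.2
  set d := θ * (b - a) / (2 * (n + 1))
  have hvol : ENNReal.ofReal (2 * (n + 1 : ℕ) * d) < volume E := by
    convert hE using 2
    simp only [d]; push_cast; field_simp
  obtain ⟨x, hxE, hsep⟩ := exists_separated_points_of_lt_volume ⟨a, fun _ hy => hy.1.1⟩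
    (by positivity) (n + 1) hvol
  have hbound := norm_eval_le_of_separated hq (t := t) (L := b - a) (by positivity) hsep
    (fun i => abs_sub_le_iff.2 ⟨by linarith [(hxE i).1.1, ht.2], by linarith [(hxE i).1.2, ht.1]⟩)
    (fun i => (hxE i).2)
  have hC : (n + 1) * ((b - a) / d) ^ n * ((2 * C)⁻¹ * M) = M / 2 := by
    simp only [C, d]; field_simp
  simp only [Real.norm_eq_abs, hC] at hbound
  linarith

theorem measure_prod_le_of_slices {α β : Type*} [MeasurableSpace α] [MeasurableSpace β]
    {μ : Measure α} {ν : Measure β} [SFinite ν] {B : Set (α × β)} (hB : MeasurableSet B)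
    {I A : Set α} {J : Set β} (hA : MeasurableSet A) (hBIJ : B ⊆ I ×ˢ J) {c : ℝ≥0∞}
    (hc : ∀ x ∈ I \ A, ν (Prod.mk x ⁻¹' B) ≤ c) :
    μ.prod ν B ≤ μ A * ν J + μ I * c := by
  have hslice : ∀ x, ν (Prod.mk x ⁻¹' B) ≤
      A.indicator (fun _ => ν J) x + I.indicator (fun _ => c) x := by
    intro x
    by_cases hxA : x ∈ A
    · rw [indicator_of_mem hxA]
      exact le_add_right (measure_mono fun y hy => (hBIJ hy).2)
    by_cases hxI : x ∈ I
    · rw [indicator_of_mem hxI]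
      exact le_add_left (hc x ⟨hxI, hxA⟩)
    · have : Prod.mk x ⁻¹' B = ∅ := eq_empty_of_forall_notMem fun y hy => hxI (hBIJ hy).1
      simp [this]
  rw [Measure.prod_apply hB]
  calc ∫⁻ x, ν (Prod.mk x ⁻¹' B) ∂μ
      ≤ ∫⁻ x, (A.indicator (fun _ => ν J) x + I.indicator (fun _ => c) x) ∂μ :=
        lintegral_mono hslice
    _ ≤ ν J * μ A + c * μ I := by
        rw [lintegral_add_left (measurable_const.indicator hA), lintegral_indicator_const hA]
        gcongr
        exact lintegral_indicator_const_le I c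
    _ = μ A * ν J + μ I * c := by ring

def IsSeparatelyPolyDeg (f : ℝ × ℝ → ℝ) (n : ℕ) : Prop :=
  (∀ y, ∃ q : ℝ[X], q.natDegree ≤ n ∧ ∀ x, f (x, y) = q.eval x) ∧
    ∀ x, ∃ q : ℝ[X], q.natDegree ≤ n ∧ ∀ y, f (x, y) = q.eval y

theorem exists_volume_sublevel_rectangle_le (n : ℕ) {θ : ℝ} (hθ : 0 < θ) :
    ∃ δ > 0, ∀ f : ℝ × ℝ → ℝ, Measurable f → IsSeparatelyPolyDeg f n →
      ∀ a₁ b₁ a₂ b₂ M : ℝ, 0 < M → (∃ z ∈ Icc a₁ b₁ ×ˢ Icc a₂ b₂, M ≤ |f z|) →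
      volume {z ∈ Icc a₁ b₁ ×ˢ Icc a₂ b₂ | |f z| ≤ δ * M} ≤
        ENNReal.ofReal (2 * θ * (b₁ - a₁) * (b₂ - a₂)) := by
  obtain ⟨δ, hδ, hremez⟩ := exists_volume_sublevel_Icc_le n hθ
  refine ⟨δ * δ, by positivity, ?_⟩
  rintro f hf ⟨hrow, hcol⟩ a₁ b₁ a₂ b₂ M hM ⟨⟨x₀, y₀⟩, ⟨hx₀, hy₀⟩, hMz⟩
  obtain ⟨q, hq, hfq⟩ := hrow y₀
  set A := {x ∈ Icc a₁ b₁ | |q.eval x| ≤ δ * M}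
  have hA : volume A ≤ ENNReal.ofReal (θ * (b₁ - a₁)) :=
    hremez q hq a₁ b₁ M hM ⟨x₀, hx₀, hfq x₀ ▸ hMz⟩
  have hslice : ∀ x ∈ Icc a₁ b₁ \ A,
      volume (Prod.mk x ⁻¹' {z ∈ Icc a₁ b₁ ×ˢ Icc a₂ b₂ | |f z| ≤ δ * δ * M}) ≤
        ENNReal.ofReal (θ * (b₂ - a₂)) := by
    rintro x ⟨hx, hxA⟩
    obtain ⟨r, hr, hfr⟩ := hcol x
    have hlarge : δ * M ≤ |r.eval y₀| := by
      rw [← hfr, hfq]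
      exact (not_le.1 fun h => hxA ⟨hx, h⟩).le
    refine (measure_mono fun y hy => ?_).trans
      (hremez r hr a₂ b₂ (δ * M) (by positivity) ⟨y₀, hy₀, hlarge⟩)
    exact ⟨hy.1.2, by rw [← hfr, ← mul_assoc]; exact hy.2⟩
  have h₁ : 0 ≤ b₁ - a₁ := by linarith [hx₀.1, hx₀.2]
  have h₂ : 0 ≤ b₂ - a₂ := by linarith [hy₀.1, hy₀.2]
  rw [Measure.volume_eq_prod]
  calc volume.prod volume {z ∈ Icc a₁ b₁ ×ˢ Icc a₂ b₂ | |f z| ≤ δ * δ * M}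
      ≤ volume A * volume (Icc a₂ b₂) + volume (Icc a₁ b₁) * ENNReal.ofReal (θ * (b₂ - a₂)) :=
        measure_prod_le_of_slices ((measurableSet_Icc.prod measurableSet_Icc).sep_abs_le hf _)
          (measurableSet_Icc.sep_abs_le q.continuous.measurable _) (sep_subset _ _) hslice
    _ ≤ ENNReal.ofReal (θ * (b₁ - a₁)) * ENNReal.ofReal (b₂ - a₂) +
          ENNReal.ofReal (b₁ - a₁) * ENNReal.ofReal (θ * (b₂ - a₂)) := by
        rw [Real.volume_Icc, Real.volume_Icc]; gcongr
    _ = ENNReal.ofReal (2 * θ * (b₁ - a₁) * (b₂ - a₂)) := by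
        rw [← ENNReal.ofReal_mul (by positivity), ← ENNReal.ofReal_mul h₁,
          ← ENNReal.ofReal_add (by positivity) (by positivity)]
        ring_nf

theorem Polynomial.eval_mvPolynomial_aeval {σ R : Type*} [CommSemiring R] (g : σ → R[X])
    (p : MvPolynomial σ R) (x : R) :
    (MvPolynomial.aeval g p).eval x = MvPolynomial.eval (fun i => (g i).eval x) p := by
  rw [← coe_aeval_eq_eval, ← AlgHom.comp_apply, MvPolynomial.comp_aeval,
    MvPolynomial.aeval_eq_eval]

theorem isSeparatelyPolyDeg_eval {p : MvPolynomial (Fin 2) ℝ} {n : ℕ} (hp : p.totalDegree ≤ n) :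
    IsSeparatelyPolyDeg (fun z => MvPolynomial.eval ![z.1, z.2] p) n := by
  have hdeg {a b : ℝ[X]} (ha : a.natDegree ≤ 1) (hb : b.natDegree ≤ 1) :
      (MvPolynomial.aeval ![a, b] p).natDegree ≤ n := by
    refine (MvPolynomial.aeval_natDegree_le p hp _ fun i => ?_).trans_eq (mul_one n)
    fin_cases i
    exacts [ha, hb]
  have hC (x : ℝ) : (C x).natDegree ≤ 1 := (natDegree_C x).trans_le zero_le_one
  constructor
  · refine fun y => ⟨_, hdeg natDegree_X_le (hC y), fun x => ?_⟩
    have : (fun i => (![X, C y] i).eval x) = ![x, y] := by ext i; fin_cases i <;> simp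
    rw [eval_mvPolynomial_aeval, this]
  · refine fun x => ⟨_, hdeg (hC x) natDegree_X_le, fun y => ?_⟩
    have : (fun i => (![C x, X] i).eval y) = ![x, y] := by ext i; fin_cases i <;> simp
    rw [eval_mvPolynomial_aeval, this]

def euclideanToProd (x : EuclideanSpace ℝ (Fin 2)) : ℝ × ℝ := (x 0, x 1)

theorem continuous_euclideanToProd : Continuous euclideanToProd := by
  unfold euclideanToProd; fun_prop

theorem measurePreserving_euclideanToProd : MeasurePreserving euclideanToProd :=
  (volume_preserving_finTwoArrow ℝ).comp
    (EuclideanSpace.volume_preserving_symm_measurableEquiv_toLp (Fin 2))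

theorem IsPolyDeg.eq_comp_euclideanToProd {P : EuclideanSpace ℝ (Fin 2) → ℝ} {k : ℕ}
    (hP : IsPolyDeg P k) :
    ∃ f : ℝ × ℝ → ℝ, Continuous f ∧ IsSeparatelyPolyDeg f k ∧ P = f ∘ euclideanToProd := by
  obtain ⟨p, hp, hPp⟩ := hP
  refine ⟨_, (MvPolynomial.continuous_eval p).comp (by fun_prop), isSeparatelyPolyDeg_eval hp, ?_⟩
  ext x
  rw [hPp]
  congr; ext i; fin_cases i <;> rfl

section Square

variable {Q : Set (EuclideanSpace ℝ (Fin 2))} {c : EuclideanSpace ℝ (Fin 2)} {s : ℝ}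

theorem IsSquare2.eq_preimage (hQ : IsSquare2 Q c s) :
    Q = euclideanToProd ⁻¹' (Icc (c 0) (c 0 + s) ×ˢ Icc (c 1) (c 1 + s)) := by
  obtain ⟨-, rfl⟩ := hQ
  ext x
  simp only [mem_ofPred_eq, mem_preimage, mem_prod, euclideanToProd, Fin.forall_fin_two]

theorem IsSquare2.volume_eq (hQ : IsSquare2 Q c s) : volume Q = ENNReal.ofReal (s ^ 2) := by
  rw [hQ.eq_preimage, measurePreserving_euclideanToProd.measure_preimage
    (measurableSet_Icc.prod measurableSet_Icc).nullMeasurableSet, Measure.volume_eq_prod,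
    Measure.prod_prod, Real.volume_Icc, Real.volume_Icc, add_sub_cancel_left, add_sub_cancel_left,
    ← ENNReal.ofReal_mul hQ.1.le, sq]

theorem IsSquare2.isCompact (hQ : IsSquare2 Q c s) : IsCompact Q := by
  rw [hQ.eq_preimage]
  exact ((PiLp.homeomorph 2 fun _ : Fin 2 => ℝ).trans Homeomorph.finTwoArrow).isCompact_preimage.2
    (isCompact_Icc.prod isCompact_Icc)

theorem IsSquare2.nonempty (hQ : IsSquare2 Q c s) : Q.Nonempty := by
  obtain ⟨hs, rfl⟩ := hQ
  exact ⟨c, fun i => ⟨le_rfl, by linarith⟩⟩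

end Square

theorem exists_volume_sublevel_square_le (k : ℕ) {θ : ℝ} (hθ : 0 < θ) :
    ∃ δ > 0, ∀ Q c s, IsSquare2 Q c s → ∀ P, IsPolyDeg P k →
      volume {x ∈ Q | |P x| < δ * ⨆ y ∈ Q, |P y|} ≤ ENNReal.ofReal (2 * θ * s ^ 2) := by
  obtain ⟨δ, hδ, hrect⟩ := exists_volume_sublevel_rectangle_le k hθ
  refine ⟨δ, hδ, fun Q c s hQ P hP => ?_⟩
  obtain ⟨f, hf, hfpoly, rfl⟩ := hP.eq_comp_euclideanToProd
  obtain ⟨w, hwQ, hw⟩ := hQ.isCompact.exists_isMaxOn hQ.nonempty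
    (continuous_abs.comp (hf.comp continuous_euclideanToProd)).continuousOn
  have hsup : (⨆ y ∈ Q, |f (euclideanToProd y)|) ≤ |f (euclideanToProd w)| :=
    Real.iSup_le (fun y => Real.iSup_le (fun hy => hw hy) (abs_nonneg _)) (abs_nonneg _)
  rcases (abs_nonneg (f (euclideanToProd w))).eq_or_lt with h0 | hpos
  · have : {x ∈ Q | |f (euclideanToProd x)| < δ * ⨆ y ∈ Q, |f (euclideanToProd y)|} = ∅ :=
      eq_empty_of_forall_notMem fun x hx => by
        have := hx.2.trans_le (mul_le_mul_of_nonneg_left hsup hδ.le)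
        rw [← h0, mul_zero] at this
        exact (abs_nonneg _).not_gt this
    simp [this]
  set R := Icc (c 0) (c 0 + s) ×ˢ Icc (c 1) (c 1 + s)
  have hR : MeasurableSet {z ∈ R | |f z| ≤ δ * |f (euclideanToProd w)|} :=
    (measurableSet_Icc.prod measurableSet_Icc).sep_abs_le hf.measurable _
  calc volume {x ∈ Q | |f (euclideanToProd x)| < δ * ⨆ y ∈ Q, |f (euclideanToProd y)|}
      ≤ volume (euclideanToProd ⁻¹' {z ∈ R | |f z| ≤ δ * |f (euclideanToProd w)|}) :=
        measure_mono fun x hx => ⟨hQ.eq_preimage.subset hx.1,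
          (hx.2.trans_le (mul_le_mul_of_nonneg_left hsup hδ.le)).le⟩
    _ = volume {z ∈ R | |f z| ≤ δ * |f (euclideanToProd w)|} :=
        measurePreserving_euclideanToProd.measure_preimage hR.nullMeasurableSet
    _ ≤ ENNReal.ofReal (2 * θ * (c 0 + s - c 0) * (c 1 + s - c 1)) :=
        hrect f hf.measurable hfpoly _ _ _ _ _ hpos ⟨_, hQ.eq_preimage.subset hwQ, le_rfl⟩
    _ = ENNReal.ofReal (2 * θ * s ^ 2) := by ring_nf

theorem half_le_measure_of_subset_union {α : Type*} [MeasurableSpace α] {μ : Measure α}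
    {F G B : Set α} (hF : μ F ≠ ⊤) (hcover : F ⊆ G ∪ B) (hB : μ B ≤ μ F / 2) :
    μ F / 2 ≤ μ G := by
  rw [← ENNReal.sub_half hF, tsub_le_iff_right]
  exact (measure_mono hcover).trans ((measure_union_le G B).trans (by gcongr))

/-- For `k ∈ ℕ` and `η > 0` there is `δ > 0`, depending only on `k` and `η`,
such that for every square `Q ⊆ ℝ²`, every polynomial `P` of degree at most `k`, and every
measurable `F ⊆ Q` with `|F| > η|Q|`, the set
`F̃ = {x ∈ F : |P(x)| ≥ δ max_{y ∈ Q} |P(y)|}` satisfies `|F̃| ≥ |F|/2`. -/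
theorem poly_level_set_large (k : ℕ) (η : ℝ) (hη : 0 < η) :
    ∃ δ : ℝ, 0 < δ ∧
      ∀ (Q : Set (EuclideanSpace ℝ (Fin 2))) (c : EuclideanSpace ℝ (Fin 2)) (s : ℝ),
        IsSquare2 Q c s →
        ∀ P : EuclideanSpace ℝ (Fin 2) → ℝ, IsPolyDeg P k →
        ∀ F : Set (EuclideanSpace ℝ (Fin 2)), F ⊆ Q → MeasurableSet F →
          ENNReal.ofReal η * volume Q < volume F →
          volume F / 2 ≤ volume {x ∈ F | δ * (⨆ y ∈ Q, |P y|) ≤ |P x|} := by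
  obtain ⟨δ, hδ, hsmall⟩ := exists_volume_sublevel_square_le k (θ := η / 4) (by positivity)
  refine ⟨δ, hδ, fun Q c s hQ P hP F hFQ _ hF => ?_⟩
  have hcover : F ⊆ {x ∈ F | δ * (⨆ y ∈ Q, |P y|) ≤ |P x|} ∪
      {x ∈ Q | |P x| < δ * ⨆ y ∈ Q, |P y|} := fun x hx =>
    (le_or_gt (δ * ⨆ y ∈ Q, |P y|) |P x|).imp (⟨hx, ·⟩) (⟨hFQ hx, ·⟩)
  refine half_le_measure_of_subset_union
    (measure_ne_top_of_subset hFQ (hQ.volume_eq ▸ ENNReal.ofReal_ne_top)) hcover ?_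
  calc volume {x ∈ Q | |P x| < δ * ⨆ y ∈ Q, |P y|}
      ≤ ENNReal.ofReal (2 * (η / 4) * s ^ 2) := hsmall Q c s hQ P hP
    _ = ENNReal.ofReal η * volume Q / 2 := by
        rw [hQ.volume_eq, ← ENNReal.ofReal_mul hη.le, ← ENNReal.ofReal_ofNat 2,
          ← ENNReal.ofReal_div_of_pos two_pos]
        ring_nf
    _ ≤ volume F / 2 := by gcongr
end

section
/- Let Ψ be a doubling Young function, Q a square in ℝ², and P a polynomial of degree at most k. Then ∫_Q Ψ(|P(x)|) dx ≤ |Q| Ψ(max_{y∈Q} |P(y)|), and conversely there is a constant c > 0 depending only on k and the doubling constant of Ψ such that ∫_Q Ψ(|P(x)|) dx ≥ c |Q| Ψ(max_{y∈Q} |P(y)|). -/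
open MeasureTheory

/-!
The upper bound is pointwise: `Ψ (|P x|) ≤ Ψ (max_Q |P|)` on `Q` by monotonicity.

For the lower bound, the polynomials of degree at most `k`, restricted to the unit cube, form a
finite-dimensional subspace of `C([0,1]ⁿ, ℝ)`. Its closed unit ball is compact, so Heine–Cantor
for the evaluation map makes it uniformly equicontinuous. After rescaling this gives `r = r(k) > 0`
such that, on any cube `Q` of side `s`, `|P| ≥ M / 2` (with `M = max_Q |P|`) on a subcube of side
`r s` containing a maximum point of `|P|`. Integrating over that subcube and doubling once,
`∫_Q Ψ(|P|) ≥ (r s)ⁿ Ψ(M / 2) ≥ rⁿ / max C₀ 1 · |Q| Ψ(M)`.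
-/

open Set MvPolynomial

theorem MvPolynomial.totalDegree_bind₁_le {σ τ R : Type*} [CommSemiring R] {m : ℕ}
    (f : σ → MvPolynomial τ R) (hf : ∀ i, (f i).totalDegree ≤ m) (p : MvPolynomial σ R) :
    (bind₁ f p).totalDegree ≤ m * p.totalDegree := by
  conv_lhs => rw [p.as_sum]
  rw [map_sum]
  refine totalDegree_finsetSum_le fun d hd => ?_
  rw [bind₁_monomial]
  calc (C (coeff d p) * ∏ i ∈ d.support, f i ^ d i).totalDegree
      ≤ 0 + ∑ i ∈ d.support, m * d i := by
        refine (totalDegree_mul _ _).trans (add_le_add (totalDegree_C _).le ?_)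
        refine (totalDegree_finsetProd _ _).trans (Finset.sum_le_sum fun i _ => ?_)
        rw [mul_comm m]
        exact (totalDegree_pow _ _).trans (Nat.mul_le_mul_left _ (hf i))
    _ ≤ m * p.totalDegree := by
        rw [zero_add, ← Finset.mul_sum]
        exact Nat.mul_le_mul_left _ (le_totalDegree hd)

theorem ContinuousMap.exists_abs_sub_le_mul_norm_of_dist_lt {X : Type*} [MetricSpace X]
    [CompactSpace X] (W : Submodule ℝ C(X, ℝ)) [FiniteDimensional ℝ W] {ε : ℝ} (hε : 0 < ε) :
    ∃ δ > 0, ∀ f ∈ W, ∀ x y, dist x y < δ → |f x - f y| ≤ ε * ‖f‖ := by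
  have hK : IsCompact ((↑) '' Metric.closedBall (0 : W) 1 : Set C(X, ℝ)) :=
    (isCompact_closedBall _ _).image continuous_subtype_val
  obtain ⟨δ, hδ, hF⟩ := Metric.uniformContinuousOn_iff.1
    ((hK.prod isCompact_univ).uniformContinuousOn_of_continuous
      (continuous_eval (F := C(X, ℝ))).continuousOn) ε hε
  refine ⟨δ, hδ, fun f hf x y hxy => ?_⟩
  rcases eq_or_ne f 0 with rfl | hf0
  · simp
  have hnorm : 0 < ‖f‖ := norm_pos_iff.2 hf0
  have hg : ‖f‖⁻¹ • f ∈ ((↑) '' Metric.closedBall (0 : W) 1 : Set C(X, ℝ)) :=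
    ⟨⟨_, W.smul_mem _ hf⟩, by simp [norm_smul, hnorm.ne'], rfl⟩
  have := hF (_, x) ⟨hg, trivial⟩ (_, y) ⟨hg, trivial⟩ (by simpa [Prod.dist_eq] using hxy)
  rw [Real.dist_eq, ContinuousMap.smul_apply, ContinuousMap.smul_apply, smul_eq_mul, smul_eq_mul,
    ← mul_sub, abs_mul, abs_inv, abs_norm, inv_mul_lt_iff₀ hnorm] at this
  rw [mul_comm]
  exact this.le

namespace MvPolynomial

variable {ι : Type*}

theorem eval_bind₁ {τ R : Type*} [CommSemiring R] (f : ι → MvPolynomial τ R) (x : τ → R)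
    (p : MvPolynomial ι R) :
    eval x (bind₁ f p) = eval (fun i => eval x (f i)) p := by
  simpa using aeval_bind₁ x f p

noncomputable def toContinuousMapOnLinearMap (s : Set (ι → ℝ)) :
    MvPolynomial ι ℝ →ₗ[ℝ] C(s, ℝ) where
  toFun p := ⟨fun x => eval (x : ι → ℝ) p, (continuous_eval p).comp continuous_subtype_val⟩
  map_add' p q := by ext; simp
  map_smul' r p := by ext; simp

variable [Fintype ι]

theorem exists_abs_eval_sub_le_of_dist_lt_on_Icc (k : ℕ) {ε : ℝ} (hε : 0 < ε) :
    ∃ δ > 0, ∀ p : MvPolynomial ι ℝ, p.totalDegree ≤ k → ∀ M : ℝ,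
      (∀ x ∈ Icc (0 : ι → ℝ) 1, |eval x p| ≤ M) →
      ∀ x ∈ Icc (0 : ι → ℝ) 1, ∀ y ∈ Icc (0 : ι → ℝ) 1, dist x y < δ →
        |eval x p - eval y p| ≤ ε * M := by
  set T := toContinuousMapOnLinearMap (Icc (0 : ι → ℝ) 1)
  obtain ⟨δ, hδ, hT⟩ := ContinuousMap.exists_abs_sub_le_mul_norm_of_dist_lt
    ((restrictTotalDegree ι ℝ k).map T) hε
  refine ⟨δ, hδ, fun p hp M hM x hx y hy hxy => ?_⟩
  have hM0 : 0 ≤ M := (abs_nonneg _).trans (hM 0 ⟨le_rfl, zero_le_one⟩)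
  have hTp : ‖T p‖ ≤ M := (ContinuousMap.norm_le _ hM0).2 fun x => hM x x.2
  calc |eval x p - eval y p| ≤ ε * ‖T p‖ :=
        hT (T p) (Submodule.mem_map_of_mem ((mem_restrictTotalDegree ι _ p).2 hp))
          ⟨x, hx⟩ ⟨y, hy⟩ hxy
    _ ≤ ε * M := by gcongr

end MvPolynomial

def cube {ι : Type*} (c : ι → ℝ) (s : ℝ) : Set (ι → ℝ) := Icc c (c + Function.const ι s)

section Cube

variable {ι : Type*}

theorem mem_cube {c x : ι → ℝ} {s : ℝ} : x ∈ cube c s ↔ ∀ i, c i ≤ x i ∧ x i ≤ c i + s := by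
  simp [cube, Pi.le_def, forall_and]

theorem add_smul_mem_cube_iff {c u : ι → ℝ} {s : ℝ} (hs : 0 < s) :
    c + s • u ∈ cube c s ↔ u ∈ Icc 0 1 := by
  simp only [mem_cube, mem_Icc, Pi.le_def, ← forall_and, Pi.add_apply, Pi.smul_apply, smul_eq_mul,
    Pi.zero_apply, Pi.one_apply]
  refine forall_congr' fun i => and_congr ?_ ?_
  · simp [hs]
  · rw [add_le_add_iff_left, mul_le_iff_le_one_right hs]

theorem exists_mem_cube_subset_cube {c z : ι → ℝ} {s t : ℝ} (hz : z ∈ cube c s) (ht : 0 ≤ t)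
    (hts : t ≤ s) : ∃ l, z ∈ cube l t ∧ cube l t ⊆ cube c s := by
  refine ⟨fun i => min (z i) (c i + s - t), mem_cube.2 fun i => ?_,
    fun x hx => mem_cube.2 fun i => ?_⟩
  · have := mem_cube.1 hz i
    exact ⟨min_le_left _ _, by rcases min_cases (z i) (c i + s - t) with h | h <;> linarith⟩
  · have := mem_cube.1 hz i
    have := mem_cube.1 hx i
    constructor
    · exact (le_min (by linarith) (by linarith)).trans this.1
    · linarith [min_le_right (z i) (c i + s - t)]

theorem isCompact_cube (c : ι → ℝ) (s : ℝ) : IsCompact (cube c s) := isCompact_Icc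

variable [Fintype ι]

theorem dist_le_of_mem_cube {c x y : ι → ℝ} {s : ℝ} (hs : 0 ≤ s) (hx : x ∈ cube c s)
    (hy : y ∈ cube c s) : dist x y ≤ s := by
  rw [dist_pi_le_iff hs]
  intro i
  have := mem_cube.1 hx i
  have := mem_cube.1 hy i
  rw [Real.dist_eq, abs_le]
  constructor <;> linarith

theorem toReal_volume_cube (c : ι → ℝ) {s : ℝ} (hs : 0 ≤ s) :
    (volume (cube c s)).toReal = s ^ Fintype.card ι := by
  simp [cube, Real.volume_Icc_pi, hs]

end Cube

namespace MvPolynomial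

variable {ι : Type*} [Fintype ι]

theorem exists_abs_eval_sub_le_of_dist_lt_on_cube (k : ℕ) {ε : ℝ} (hε : 0 < ε) :
    ∃ δ > 0, ∀ p : MvPolynomial ι ℝ, p.totalDegree ≤ k → ∀ (c : ι → ℝ) (s M : ℝ), 0 < s →
      (∀ x ∈ cube c s, |eval x p| ≤ M) →
      ∀ x ∈ cube c s, ∀ y ∈ cube c s, dist x y < δ * s → |eval x p - eval y p| ≤ ε * M := by
  obtain ⟨δ, hδ, hunit⟩ := exists_abs_eval_sub_le_of_dist_lt_on_Icc (ι := ι) k hε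
  refine ⟨δ, hδ, fun p hp c s M hs hM x hx y hy hxy => ?_⟩
  let q := bind₁ (fun i => C (c i) + C s * X i) p
  have hq : ∀ u, eval u q = eval (c + s • u) p := fun u => by
    rw [eval_bind₁]
    congr
    funext i
    simp
  have hq_deg : q.totalDegree ≤ k := by
    refine (totalDegree_bind₁_le _ (fun i => ?_) p).trans (by rwa [one_mul])
    exact (totalDegree_add _ _).trans (max_le (by simp) ((totalDegree_mul _ _).trans (by simp)))
  have hback : ∀ x, c + s • (s⁻¹ • (x - c)) = x := fun x => by
    rw [smul_smul, mul_inv_cancel₀ hs.ne', one_smul, add_sub_cancel]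
  have hmem_unit : ∀ x ∈ cube c s, s⁻¹ • (x - c) ∈ Icc (0 : ι → ℝ) 1 := fun x hx =>
    (add_smul_mem_cube_iff hs).1 ((hback x).symm ▸ hx)
  have hdist : dist (s⁻¹ • (x - c)) (s⁻¹ • (y - c)) < δ := by
    rw [dist_smul₀, dist_sub_right, Real.norm_eq_abs, abs_inv, abs_of_pos hs, inv_mul_lt_iff₀ hs,
      mul_comm]
    exact hxy
  have := hunit q hq_deg M (fun u hu => by rw [hq]; exact hM _ ((add_smul_mem_cube_iff hs).2 hu))
    _ (hmem_unit x hx) _ (hmem_unit y hy) hdist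
  rwa [hq, hq, hback, hback] at this

end MvPolynomial

theorem IsMaxOn.biSup_eq {α : Type*} {f : α → ℝ} {s : Set α} {z : α} (h : IsMaxOn f s z)
    (hz : z ∈ s) (h0 : 0 ≤ f z) : ⨆ x ∈ s, f x = f z := by
  have hle : ∀ x, ⨆ _ : x ∈ s, f x ≤ f z := fun x => Real.iSup_le (fun hx => h hx) h0
  refine le_antisymm (Real.iSup_le hle h0) ?_
  refine le_ciSup_of_le ⟨f z, ?_⟩ z (by rw [ciSup_pos hz])
  rintro _ ⟨x, rfl⟩
  exact hle x

section ModularIntegral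

variable {X : Type*} [MeasurableSpace X] {μ : Measure X} {Ψ : ℝ → ℝ}

theorem measurable_comp_abs_of_monotoneOn (hΨ : MonotoneOn Ψ (Ici 0)) :
    Measurable fun t => Ψ |t| := by
  have hmono : Monotone fun t => Ψ (max t 0) := fun t u htu =>
    hΨ (le_max_right t 0) (le_max_right u 0) (max_le_max htu le_rfl)
  have hcomp : (fun t => Ψ |t|) = (fun t => Ψ (max t 0)) ∘ abs := by
    ext t
    simp
  rw [hcomp]
  exact hmono.measurable.comp measurable_abs

theorem IsCompact.integrableOn_comp_abs [TopologicalSpace X] [T2Space X] [OpensMeasurableSpace X]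
    [IsFiniteMeasureOnCompacts μ] {S : Set X} (hS : IsCompact S) (hΨ : MonotoneOn Ψ (Ici 0))
    (hΨ0 : ∀ t, 0 ≤ t → 0 ≤ Ψ t) {f : X → ℝ} (hf : Continuous f) :
    IntegrableOn (fun x => Ψ |f x|) S μ := by
  obtain ⟨M, hM⟩ := hS.exists_bound_of_continuousOn hf.continuousOn
  refine Measure.integrableOn_of_bounded hS.measure_ne_top
    ((measurable_comp_abs_of_monotoneOn hΨ).comp hf.measurable).aestronglyMeasurable (M := Ψ M)
    ((ae_restrict_iff' hS.isClosed.measurableSet).2 (Filter.Eventually.of_forall fun x hx => ?_))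
  rw [Real.norm_eq_abs, abs_of_nonneg (hΨ0 _ (abs_nonneg _))]
  exact hΨ (mem_Ici.2 (abs_nonneg _)) (mem_Ici.2 ((norm_nonneg _).trans (hM x hx))) (hM x hx)

theorem IsCompact.setIntegral_comp_abs_le_biSup [TopologicalSpace X] [T2Space X]
    [OpensMeasurableSpace X] [IsFiniteMeasureOnCompacts μ] {S : Set X} (hS : IsCompact S)
    (hΨ : MonotoneOn Ψ (Ici 0)) (hΨ0 : ∀ t, 0 ≤ t → 0 ≤ Ψ t) {f : X → ℝ} (hf : Continuous f) :
    ∫ x in S, Ψ |f x| ∂μ ≤ (μ S).toReal * Ψ (⨆ y ∈ S, |f y|) := by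
  rcases S.eq_empty_or_nonempty with rfl | hne
  · simp
  obtain ⟨z, hz, hmax⟩ := hS.exists_isMaxOn hne hf.abs.continuousOn
  have hle : ∀ x ∈ S, Ψ |f x| ≤ Ψ |f z| := fun x hx =>
    hΨ (mem_Ici.2 (abs_nonneg _)) (mem_Ici.2 (abs_nonneg _)) (hmax hx)
  rw [hmax.biSup_eq hz (abs_nonneg _)]
  calc ∫ x in S, Ψ |f x| ∂μ ≤ ∫ _ in S, Ψ |f z| ∂μ :=
        integral_mono_of_nonneg (Filter.Eventually.of_forall fun x => hΨ0 _ (abs_nonneg _))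
          (integrableOn_const hS.measure_ne_top)
          ((ae_restrict_iff' hS.isClosed.measurableSet).2 (Filter.Eventually.of_forall hle))
    _ = (μ S).toReal * Ψ |f z| := by rw [setIntegral_const, smul_eq_mul, measureReal_def]

end ModularIntegral

namespace MvPolynomial

variable {ι : Type*} [Fintype ι]

theorem exists_subcube_half_abs_eval_le (k : ℕ) :
    ∃ r > 0, ∀ p : MvPolynomial ι ℝ, p.totalDegree ≤ k → ∀ (c z : ι → ℝ) (s : ℝ), 0 < s →
      z ∈ cube c s → IsMaxOn (fun x => |eval x p|) (cube c s) z →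
      ∃ l, cube l (r * s) ⊆ cube c s ∧ ∀ x ∈ cube l (r * s), |eval z p| / 2 ≤ |eval x p| := by
  obtain ⟨δ, hδ, hosc⟩ := exists_abs_eval_sub_le_of_dist_lt_on_cube (ι := ι) k (ε := 1 / 2)
    (by norm_num)
  -- `r ≤ 1 / 2` lets the subcube fit in `Q`; `r < δ` keeps it inside the oscillation radius.
  have hr : min δ 1 / 2 < δ := by linarith [min_le_left δ 1]
  refine ⟨min δ 1 / 2, by positivity, fun p hp c z s hs hz hmax => ?_⟩
  obtain ⟨l, hzl, hlc⟩ := exists_mem_cube_subset_cube hz (t := min δ 1 / 2 * s)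
    (by positivity) (by nlinarith [min_le_right δ 1])
  refine ⟨l, hlc, fun x hx => ?_⟩
  have hdist : dist x z < δ * s :=
    (dist_le_of_mem_cube (by positivity) hx hzl).trans_lt (by nlinarith)
  have hxz := hosc p hp c s _ hs (fun y hy => hmax hy) x (hlc hx) z hz hdist
  linarith [abs_sub_abs_le_abs_sub (eval z p) (eval x p), abs_sub_comm (eval z p) (eval x p)]

theorem exists_pos_mul_le_setIntegral_cube_comp_abs_eval (k : ℕ) (C0 : ℝ) :
    ∃ a > 0, ∀ Ψ : ℝ → ℝ, MonotoneOn Ψ (Ici 0) → (∀ t, 0 ≤ t → 0 ≤ Ψ t) →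
      (∀ t, 0 ≤ t → Ψ (2 * t) ≤ C0 * Ψ t) → ∀ (c : ι → ℝ) (s : ℝ), 0 < s →
      ∀ p : MvPolynomial ι ℝ, p.totalDegree ≤ k →
        a * ((volume (cube c s)).toReal * Ψ (⨆ y ∈ cube c s, |eval y p|)) ≤
          ∫ x in cube c s, Ψ |eval x p| := by
  obtain ⟨r, hr, hsub⟩ := exists_subcube_half_abs_eval_le (ι := ι) k
  refine ⟨r ^ Fintype.card ι / max C0 1, by positivity,
    fun Ψ hΨ hΨ0 hdbl c s hs p hp => ?_⟩
  obtain ⟨z, hz, hmax⟩ := (isCompact_cube c s).exists_isMaxOn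
    ⟨c, mem_cube.2 fun i => ⟨le_rfl, by linarith⟩⟩ (continuous_eval p).abs.continuousOn
  obtain ⟨l, hlc, hhalf⟩ := hsub p hp c z s hs hz hmax
  set M := |eval z p|
  have hdouble : Ψ M ≤ max C0 1 * Ψ (M / 2) := calc
    Ψ M = Ψ (2 * (M / 2)) := by ring_nf
    _ ≤ C0 * Ψ (M / 2) := hdbl _ (by positivity)
    _ ≤ max C0 1 * Ψ (M / 2) := by gcongr; exacts [hΨ0 _ (by positivity), le_max_left _ _]
  have hC : 0 < max C0 1 := lt_max_of_lt_right one_pos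
  rw [hmax.biSup_eq hz (abs_nonneg _), toReal_volume_cube c hs.le]
  calc r ^ Fintype.card ι / max C0 1 * (s ^ Fintype.card ι * Ψ M)
      ≤ r ^ Fintype.card ι / max C0 1 * (s ^ Fintype.card ι * (max C0 1 * Ψ (M / 2))) := by
        gcongr
    _ = Ψ (M / 2) * (volume (cube l (r * s))).toReal := by
        rw [toReal_volume_cube l (by positivity), mul_pow]
        field_simp
    _ ≤ ∫ x in cube l (r * s), Ψ |eval x p| :=
        setIntegral_ge_of_const_le_real (isCompact_cube l _).isClosed.measurableSet
          (isCompact_cube l _).measure_ne_top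
          (fun x hx => hΨ (mem_Ici.2 (by positivity)) (mem_Ici.2 (abs_nonneg _)) (hhalf x hx))
          ((isCompact_cube l _).integrableOn_comp_abs hΨ hΨ0 (continuous_eval p))
    _ ≤ ∫ x in cube c s, Ψ |eval x p| :=
        setIntegral_mono_set
          ((isCompact_cube c s).integrableOn_comp_abs hΨ hΨ0 (continuous_eval p))
          (Filter.Eventually.of_forall fun x => hΨ0 _ (abs_nonneg _)) hlc.eventuallyLE

end MvPolynomial

/-- for a doubling Young function `Ψ`, a square `Q` and a polynomial `P`
of degree at most `k`, one has `∫_Q Ψ(|P|) ≤ |Q| Ψ(max_Q |P|)`, and conversely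
`∫_Q Ψ(|P|) ≥ c |Q| Ψ(max_Q |P|)` with `c = c(k, C₀) > 0`. -/
theorem poly_modular_max_comparison (k : ℕ) (C0 : ℝ) :
    ∃ c : ℝ, 0 < c ∧ ∀ Ψ : ℝ → ℝ,
      ConvexOn ℝ (Set.Ici 0) Ψ →
      MonotoneOn Ψ (Set.Ici 0) →
      Ψ 0 = 0 →
      (∀ t : ℝ, 0 ≤ t → 0 ≤ Ψ t) →
      (∀ t : ℝ, 0 ≤ t → Ψ (2 * t) ≤ C0 * Ψ t) →
      ∀ (Q : Set (EuclideanSpace ℝ (Fin 2))) (c₀ : EuclideanSpace ℝ (Fin 2)) (s : ℝ),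
        IsSquare2 Q c₀ s →
        ∀ P : EuclideanSpace ℝ (Fin 2) → ℝ, IsPolyDeg P k →
          (∫ x in Q, Ψ (|P x|)) ≤ (volume Q).toReal * Ψ (⨆ y ∈ Q, |P y|) ∧
          c * ((volume Q).toReal * Ψ (⨆ y ∈ Q, |P y|)) ≤ ∫ x in Q, Ψ (|P x|) := by
  obtain ⟨a, ha, hlower⟩ := exists_pos_mul_le_setIntegral_cube_comp_abs_eval (ι := Fin 2) k C0
  refine ⟨a, ha, fun Ψ _ hΨ _ hΨ0 hdbl Q c₀ s ⟨hs, hQ⟩ P ⟨p, hp, hP⟩ => ?_⟩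
  set S := cube (WithLp.ofLp c₀) s
  obtain rfl : Q = WithLp.ofLp ⁻¹' S := by
    ext x
    simp [S, hQ, mem_cube]
  obtain rfl : P = fun x => eval (WithLp.ofLp x) p := funext hP
  have hofLp := PiLp.volume_preserving_ofLp (Fin 2)
  have hsup : ⨆ y ∈ WithLp.ofLp ⁻¹' S, |eval (WithLp.ofLp y) p| = ⨆ y ∈ S, |eval y p| :=
    (WithLp.ofLp_surjective 2).iSup_comp fun y => ⨆ _ : y ∈ S, |eval y p|
  beta_reduce
  rw [hofLp.setIntegral_preimage_emb (MeasurableEquiv.toLp 2 (Fin 2 → ℝ)).symm.measurableEmbedding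
      (fun y => Ψ |eval y p|),
    hofLp.measure_preimage (isCompact_cube _ s).measurableSet.nullMeasurableSet, hsup]
  exact ⟨(isCompact_cube _ s).setIntegral_comp_abs_le_biSup hΨ hΨ0 (continuous_eval p),
    hlower Ψ hΨ hΨ0 hdbl _ s hs p hp⟩
end
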